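/- arXiv:1005.5506 — 10 statements merged into one kernel-verified Lean document; each statement's English description precedes it below -/
import Mathlib

section
/- Let λ ∈ ℂ with λ ∉ {-2, -1, 0, 1}, and let f : ℤ → ℂ satisfy (m - λn)·f(m) - (n - λm)·f(n) = (m-n)·f(m+n) for all m, n ∈ ℤ. Then f(m) = m·f(1) for all m ∈ ℤ. -/
theorem stmt_2 (lam : ℂ) (h2 : lam ≠ -2) (h1 : lam ≠ -1) (h0 : lam ≠ 0) (h1' : lam ≠ 1)
    (f : ℤ → ℂ)
    (h : ∀ m n : ℤ,
      ((m : ℂ) - lam * (n : ℂ)) * f m - ((n : ℂ) - lam * (m : ℂ)) * f n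
        = ((m : ℂ) - (n : ℂ)) * f (m + n)) :
    ∀ m : ℤ, f m = (m : ℂ) * f 1 := by
  have hf0 : f 0 = 0 := by
    have e := h 1 0
    push_cast at e
    have hl : lam * f 0 = 0 := by linear_combination e
    rcases mul_eq_zero.1 hl with h' | h'
    · exact absurd h' h0
    · exact h'
  have h1l : (1 : ℂ) + lam ≠ 0 := fun hh => h1 (by linear_combination hh)
  have h2l : (2 : ℂ) + lam ≠ 0 := fun hh => h2 (by linear_combination hh)
  have hneg : ∀ m : ℤ, f (-m) = -f m := by
    intro m
    rcases eq_or_ne m 0 with rfl | hm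
    · simp [hf0]
    have e := h m (-m)
    rw [add_neg_cancel, hf0] at e
    push_cast at e
    have hmc : (m : ℂ) ≠ 0 := Int.cast_ne_zero.mpr hm
    have key : ((1 + lam) * m) * (f m + f (-m)) = 0 := by linear_combination e
    rcases mul_eq_zero.1 key with h' | h'
    · exact absurd h' (mul_ne_zero h1l hmc)
    · linear_combination h'
  have hf2 : f 2 = 2 * f 1 := by
    have e := h 2 (-1)
    norm_num at e
    have hn1 := hneg 1
    apply mul_left_cancel₀ h2l
    linear_combination e + (-1 - 2 * lam) * hn1
  have hnat : ∀ n : ℕ, 2 ≤ n → f n = n * f 1 := by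
    intro n hn
    induction n, hn using Nat.le_induction with
    | base => push_cast; exact hf2
    | succ n hn ih =>
      have e := h n 1
      push_cast at e ⊢
      have hn1 : (n : ℂ) - 1 ≠ 0 := by
        have : (n : ℂ) ≠ 1 := by
          intro hh
          have : (n : ℕ) = 1 := by exact_mod_cast hh
          omega
        intro hh; exact this (by linear_combination hh)
      apply mul_left_cancel₀ hn1
      linear_combination -e + ((n : ℂ) - lam) * ih
  intro m
  rcases le_or_gt 0 m with hm | hm
  · obtain ⟨n, rfl⟩ := Int.eq_ofNat_of_zero_le hm
    match n with
    | 0 => simpa using hf0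
    | 1 => push_cast; ring
    | (n + 2) => exact_mod_cast hnat (n + 2) (by omega)
  · obtain ⟨n, rfl⟩ := Int.eq_negSucc_of_lt_zero hm
    have : f (Int.negSucc n) = f (-(n + 1 : ℕ)) := by norm_num [Int.negSucc_eq]
    rw [this, hneg]
    have h' : f ((n + 1 : ℕ) : ℤ) = ((n + 1 : ℕ) : ℂ) * f 1 := by
      match n with
      | 0 => push_cast; ring
      | k + 1 => exact_mod_cast hnat (k + 2) (by omega)
    rw [h']
    push_cast [Int.negSucc_eq]
    ring
end

section
/- Let f : ℤ → ℂ satisfy (m + 2n)·f(m) - (n + 2m)·f(n) = (m-n)·f(m+n) for all m, n ∈ ℤ (the case λ = -2). Then f(m) = (1/6)·m·(m+1)·(m-1)·f(2) - (1/3)·m·(m-2)·(m+2)·f(1) for all m ∈ ℤ. -/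
theorem stmt_3 (f : ℤ → ℂ)
    (h : ∀ m n : ℤ,
      ((m : ℂ) + 2 * (n : ℂ)) * f m - ((n : ℂ) + 2 * (m : ℂ)) * f n
        = ((m : ℂ) - (n : ℂ)) * f (m + n)) :
    ∀ m : ℤ, f m = (1 / 6) * (m : ℂ) * ((m : ℂ) + 1) * ((m : ℂ) - 1) * f 2
      - (1 / 3) * (m : ℂ) * ((m : ℂ) - 2) * ((m : ℂ) + 2) * f 1 := by
  have h0 : f 0 = 0 := by
    have e := h 1 0
    norm_num at e
    exact e
  have hodd : ∀ m : ℤ, (m : ℂ) ≠ 0 → f (-m) = - f m := by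
    intro m hm
    have e := h m (-m)
    rw [add_neg_cancel, h0] at e
    push_cast at e
    apply mul_left_cancel₀ hm
    linear_combination -e
  have key : ∀ n : ℕ, f (n : ℤ) = (1 / 6) * ((n : ℤ) : ℂ) * (((n : ℤ) : ℂ) + 1) * (((n : ℤ) : ℂ) - 1) * f 2
      - (1 / 3) * ((n : ℤ) : ℂ) * (((n : ℤ) : ℂ) - 2) * (((n : ℤ) : ℂ) + 2) * f 1 := by
    intro n
    induction n using Nat.strong_induction_on with
    | _ n ih =>
      match n with
      | 0 => push_cast; rw [h0]; ring
      | 1 => push_cast; ring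
      | 2 => push_cast; ring
      | (k + 3) =>
        have ihk := ih (k + 2) (by omega)
        have e := h (k + 2) 1
        push_cast at e ihk ⊢
        have e2 : ((k : ℤ) + 2 + 1) = (k : ℤ) + 3 := by ring
        rw [e2] at e
        have hne : (k : ℂ) + 1 ≠ 0 := Nat.cast_add_one_ne_zero k
        apply mul_left_cancel₀ hne
        linear_combination -e + ((k : ℂ) + 4) * ihk
  intro m
  obtain ⟨n, rfl | rfl⟩ := Int.eq_nat_or_neg m
  · exact key n
  · rcases Nat.eq_zero_or_pos n with rfl | hn
    · simp only [Nat.cast_zero, neg_zero, Int.cast_zero, h0]; ring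
    · have hne : ((n : ℤ) : ℂ) ≠ 0 := by
        simp only [Int.cast_natCast, Ne, Nat.cast_eq_zero]
        omega
      rw [hodd _ hne, key n]
      push_cast
      ring
end

section
/- Let f : ℤ → ℂ satisfy (m + n)·f(m) - (n + m)·f(n) = (m-n)·f(m+n) for all m, n ∈ ℤ (the case λ = -1). Then f(m) = (1/2)·m·(m-1)·f(2) - m·(m-2)·f(1) for all m ∈ ℤ. -/
/-!
Every `f(m) = a m + b m²` solves the equation, and the interpolant in the statement is the one
agreeing with `f` at `1` and `2`. The difference `g` of two solutions is again a solution, and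
`n = 1` gives the recurrence `(m + 1) g(m) = (m - 1) g(m + 1)` once `g(1) = 0`. Its coefficients
vanish only at `m = ±1`, so `g` is determined by `g(2)` upwards and by `g(-1)` downwards, and both
are zero when `g(1) = g(2) = 0`.
-/

variable {K : Type*} [Field K]

def FunctionalEq (f : ℤ → K) : Prop :=
  ∀ m n : ℤ, ((m : K) + (n : K)) * f m - ((n : K) + (m : K)) * f n
    = ((m : K) - (n : K)) * f (m + n)

theorem FunctionalEq.sub {f g : ℤ → K} (hf : FunctionalEq f) (hg : FunctionalEq g) :
    FunctionalEq (f - g) := fun m n => by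
  simp only [Pi.sub_apply]
  linear_combination hf m n - hg m n

theorem functionalEq_interpolant (c₁ c₂ : K) :
    FunctionalEq fun m : ℤ => 1 / 2 * (m : K) * ((m : K) - 1) * c₂ - (m : K) * ((m : K) - 2) * c₁ :=
  fun m n => by push_cast; ring

theorem eq_zero_of_recurrence [CharZero K] {g : ℤ → K}
    (hrec : ∀ m : ℤ, ((m : K) + 1) * g m = ((m : K) - 1) * g (m + 1))
    (hneg : g (-1) = 0) (htwo : g 2 = 0) (m : ℤ) : g m = 0 := by
  have hone : g 1 = 0 := by simpa using hrec 1
  have hzero : g 0 = 0 := by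
    have h := hrec (-1)
    norm_num at h
    exact h
  have hup : ∀ n, 2 ≤ n → g n = 0 := by
    refine Int.leInduction htwo fun n hn ih => ?_
    have hcoeff : (n : K) - 1 ≠ 0 := sub_ne_zero.mpr (by exact_mod_cast (by omega : n ≠ 1))
    simpa [ih, hcoeff] using (hrec n).symm
  have hdown : ∀ n, n ≤ -1 → g n = 0 := by
    refine Int.leInductionDown hneg fun n hn ih => ?_
    have hcoeff : (n : K) ≠ 0 := by exact_mod_cast (by omega : n ≠ 0)
    have h := hrec (n - 1)
    simp only [Int.cast_sub, Int.cast_one, sub_add_cancel, ih, mul_zero] at h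
    exact (mul_eq_zero.mp h).resolve_left hcoeff
  rcases (by omega : m ≤ -1 ∨ m = 0 ∨ m = 1 ∨ 2 ≤ m) with hm | rfl | rfl | hm
  exacts [hdown m hm, hzero, hone, hup m hm]

theorem FunctionalEq.eq_zero [CharZero K] {g : ℤ → K} (hg : FunctionalEq g) (hone : g 1 = 0)
    (htwo : g 2 = 0) (m : ℤ) : g m = 0 := by
  have hneg : g (-1) = 0 := by
    have h := hg 2 (-1)
    norm_num [htwo, hone] at h
    exact h
  refine eq_zero_of_recurrence (fun m => ?_) hneg htwo m
  have h := hg m 1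
  push_cast at h
  linear_combination h + ((m : K) + 1) * hone

theorem stmt_4 (f : ℤ → ℂ)
    (h : ∀ m n : ℤ,
      ((m : ℂ) + (n : ℂ)) * f m - ((n : ℂ) + (m : ℂ)) * f n
        = ((m : ℂ) - (n : ℂ)) * f (m + n)) :
    ∀ m : ℤ, f m = (1 / 2) * (m : ℂ) * ((m : ℂ) - 1) * f 2
      - (m : ℂ) * ((m : ℂ) - 2) * f 1 := by
  intro m
  have hdiff := FunctionalEq.sub h (functionalEq_interpolant (f 1) (f 2))
  refine sub_eq_zero.mp (hdiff.eq_zero ?_ ?_ m) <;> norm_num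
end

section
/- Let λ ∈ ℂ with λ ∉ {-5, -3, -1, 1}, and let f : ℤ → ℂ satisfy (2m - (λ+1)n)·f(m) - (2n - (λ+1)m)·f(n) = 2(m-n)·f(m+n) for all m, n ∈ ℤ. Then f(m) = m·f(1) for all m ∈ ℤ. -/
theorem stmt_5 (lam : ℂ) (h5 : lam ≠ -5) (h3 : lam ≠ -3) (h1 : lam ≠ -1) (h1' : lam ≠ 1)
    (f : ℤ → ℂ)
    (h : ∀ m n : ℤ,
      (2 * (m : ℂ) - (lam + 1) * (n : ℂ)) * f m
        - (2 * (n : ℂ) - (lam + 1) * (m : ℂ)) * f n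
        = 2 * ((m : ℂ) - (n : ℂ)) * f (m + n)) :
    ∀ m : ℤ, f m = (m : ℂ) * f 1 := by
  have hl1 : lam + 1 ≠ 0 := fun hh => h1 (by linear_combination hh)
  have hl3 : lam + 3 ≠ 0 := fun hh => h3 (by linear_combination hh)
  have hl5 : lam + 5 ≠ 0 := fun hh => h5 (by linear_combination hh)
  have f0 : f 0 = 0 := by
    have h10 := h 1 0
    norm_num at h10
    rcases h10 with hh | hh
    · exact absurd (by linear_combination -hh : lam = -1) h1
    · exact hh
  have odd : ∀ m : ℤ, f (-m) = - f m := by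
    intro m
    rcases eq_or_ne m 0 with rfl | hm
    · simp only [neg_zero, f0, neg_zero]
    have hmm := h m (-m)
    push_cast at hmm
    rw [add_neg_cancel, f0] at hmm
    have hkey : (lam + 3) * (m : ℂ) * (f m + f (-m)) = 0 := by linear_combination hmm
    have hmC : (m : ℂ) ≠ 0 := Int.cast_ne_zero.mpr hm
    have := mul_eq_zero.mp hkey
    rcases this with hh | hh
    · exact absurd (mul_eq_zero.mp hh) (by simp [hl3, hmC])
    · linear_combination hh
  have f2 : f 2 = 2 * f 1 := by
    have h21 := h 2 (-1)
    push_cast at h21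
    norm_num at h21
    have hodd1 : f (-1) = - f 1 := odd 1
    rw [hodd1] at h21
    have : (lam + 5) * f 2 = (lam + 5) * (2 * f 1) := by linear_combination h21
    exact mul_left_cancel₀ hl5 this
  have pos : ∀ n : ℕ, f ((n : ℤ) + 2) = ((n : ℂ) + 2) * f 1 := by
    intro n
    induction n with
    | zero => simpa using f2
    | succ k ih =>
      have hk := h ((k : ℤ) + 2) 1
      push_cast at hk
      rw [ih] at hk
      have hne : 2 * (((k : ℂ) + 2) - 1) ≠ 0 := by
        have : (k : ℂ) + 1 ≠ 0 := Nat.cast_add_one_ne_zero k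
        intro hh; apply this; linear_combination hh / 2
      have heq : 2 * (((k : ℂ) + 2) - 1) * f ((k : ℤ) + 2 + 1)
          = 2 * (((k : ℂ) + 2) - 1) * (((k : ℂ) + 1 + 2) * f 1) := by
        linear_combination -hk
      have := mul_left_cancel₀ hne heq
      convert this using 2 <;> push_cast <;> ring
  have posAll : ∀ n : ℕ, f (n : ℤ) = (n : ℂ) * f 1 := by
    intro n
    match n with
    | 0 => simpa using f0
    | 1 => simp
    | (k + 2) => have := pos k; push_cast at this ⊢; convert this using 2 <;> ring
  intro m
  rcases le_or_gt 0 m with hm | hm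
  · obtain ⟨n, rfl⟩ := Int.eq_ofNat_of_zero_le hm
    simpa using posAll n
  · obtain ⟨n, rfl⟩ : ∃ n : ℕ, m = -(n : ℤ) := ⟨m.natAbs, by omega⟩
    rw [odd, posAll]
    push_cast; ring
end

section
/- Let λ ∈ ℂ with λ ∉ {-1, 1}, b ∈ ℂ, and g : ℤ → ℂ satisfy 2(m-n)·b·n + 2(m - λn)·g(m) = (2m - (1+λ)n)·g(m+n) for all m, n ∈ ℤ. Then g(n) = (2b/(1+λ))·n for all n ∈ ℤ. -/
theorem stmt_7 (lam : ℂ) (h1 : lam ≠ -1) (h1' : lam ≠ 1) (b : ℂ) (g : ℤ → ℂ)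
    (h : ∀ m n : ℤ,
      2 * ((m : ℂ) - (n : ℂ)) * (b * (n : ℂ)) + 2 * ((m : ℂ) - lam * (n : ℂ)) * g m
        = (2 * (m : ℂ) - (1 + lam) * (n : ℂ)) * g (m + n)) :
    ∀ n : ℤ, g n = (2 * b / (1 + lam)) * (n : ℂ) := by
  have hl : (1 : ℂ) + lam ≠ 0 := by
    intro hc
    exact h1 (by linear_combination hc)
  have hl' : lam - 1 ≠ 0 := sub_ne_zero.mpr h1'
  have e1 := h 0 1
  have e2 := h 1 (-1)
  simp only [Int.cast_zero, Int.cast_one, Int.cast_neg, zero_add] at e1 e2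
  norm_num at e1 e2
  have hg0 : g 0 = 0 := by
    have h3 : (3 - 3 * lam) * g 0 = 0 := by linear_combination 2 * e1 - e2
    have : (3 : ℂ) - 3 * lam ≠ 0 := by
      intro hc; apply h1'; linear_combination -hc / 3
    exact (mul_eq_zero.mp h3).resolve_left this
  intro n
  rcases eq_or_ne n 0 with rfl | hn
  · simp [hg0]
  · have hnc : (n : ℂ) ≠ 0 := Int.cast_ne_zero.mpr hn
    have e := h 0 n
    simp only [Int.cast_zero, zero_add] at e
    rw [hg0] at e
    rw [eq_comm, div_mul_eq_mul_div, div_eq_iff hl]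
    apply mul_left_cancel₀ hnc
    linear_combination -e
end

section
/- Let λ ∈ ℂ with λ ∉ {-2, 0, 1}, b ∈ ℂ, and f : ℤ → ℂ satisfy (m - λn)·f(m) - (n - λm)·f(n) = (m-n)·(f(m+n) - b²·n·m) for all m, n ∈ ℤ. If moreover λ ≠ -1, then f(m) = m·f(1) + (b²/(λ+1))·m·(m-1) for all m ∈ ℤ. -/
/-!
Subtracting the particular solution `m ↦ m f(1) + c m (m - 1)`, where `c (λ + 1) = b²`, leaves a
solution `g` of the homogeneous equation (`b = 0`) with `g 1 = 0`. Taking `n = 1` and `n = -1` gives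
the recursions `(m - λ) g m = (m - 1) g (m + 1)` and `(m + λ) g m = (m + 1) g (m - 1)`, which
propagate zeros away from `±1`; the exclusions `λ ≠ 0, -1, -2` supply the seeds
`g 0 = g (-1) = g 2 = g (-2) = 0`.
-/

def IsHomogeneousSolution {K : Type*} [Field K] (lam : K) (g : ℤ → K) : Prop :=
  ∀ m n : ℤ, ((m : K) - lam * n) * g m - ((n : K) - lam * m) * g n = ((m : K) - n) * g (m + n)

namespace IsHomogeneousSolution

variable {K : Type*} [Field K] {lam : K} {g : ℤ → K}

theorem sub_mul_eq_sub_one_mul_succ (hg : IsHomogeneousSolution lam g) (h1 : g 1 = 0) (m : ℤ) :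
    ((m : K) - lam) * g m = ((m : K) - 1) * g (m + 1) := by
  have e := hg m 1
  push_cast at e
  linear_combination e + ((1 : K) - lam * m) * h1

theorem add_mul_eq_add_one_mul_pred (hg : IsHomogeneousSolution lam g) (hm1 : g (-1) = 0)
    (m : ℤ) : ((m : K) + lam) * g m = ((m : K) + 1) * g (m - 1) := by
  have e := hg m (-1)
  push_cast at e
  rw [← sub_eq_add_neg] at e
  linear_combination e + (-(1 : K) - lam * m) * hm1

variable [CharZero K]

theorem eq_zero_of_two_le (hg : IsHomogeneousSolution lam g) (h1 : g 1 = 0) (h2 : g 2 = 0)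
    {m : ℤ} (hm : 2 ≤ m) : g m = 0 := by
  induction m, hm using Int.leInduction with
  | base => exact h2
  | succ k hk ih =>
    have e := hg.sub_mul_eq_sub_one_mul_succ h1 k
    rw [ih, mul_zero] at e
    have hk1 : (k : K) - 1 ≠ 0 := by
      rw [sub_ne_zero]; exact_mod_cast (by omega : k ≠ 1)
    exact (mul_eq_zero.mp e.symm).resolve_left hk1

theorem eq_zero_of_le_neg_two (hg : IsHomogeneousSolution lam g) (hm1 : g (-1) = 0)
    (hm2 : g (-2) = 0) {m : ℤ} (hm : m ≤ -2) : g m = 0 := by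
  induction m, hm using Int.leInductionDown with
  | base => exact hm2
  | pred k hk ih =>
    have e := hg.add_mul_eq_add_one_mul_pred hm1 k
    rw [ih, mul_zero] at e
    have hk1 : (k : K) + 1 ≠ 0 := by
      rw [← Int.cast_one, ← Int.cast_add]; exact_mod_cast (by omega : k + 1 ≠ 0)
    exact (mul_eq_zero.mp e.symm).resolve_left hk1

theorem eq_zero (hg : IsHomogeneousSolution lam g) (h1 : g 1 = 0) (h0 : lam ≠ 0)
    (h1' : lam + 1 ≠ 0) (h2 : lam + 2 ≠ 0) : g = 0 := by
  have g0 : g 0 = 0 := by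
    have e := hg 1 0
    simp only [Int.cast_one, Int.cast_zero, add_zero, h1] at e
    exact (mul_eq_zero.mp (by linear_combination e : lam * g 0 = 0)).resolve_left h0
  have gm1 : g (-1) = 0 := by
    have e := hg 1 (-1)
    simp only [Int.cast_one, Int.cast_neg, add_neg_cancel, h1, g0] at e
    exact (mul_eq_zero.mp (by linear_combination e : (lam + 1) * g (-1) = 0)).resolve_left h1'
  have g2 : g 2 = 0 := by
    have e := hg 2 (-1)
    norm_num only [Int.cast_ofNat, Int.cast_neg, Int.cast_one, h1, gm1] at e
    exact (mul_eq_zero.mp (by linear_combination e : (lam + 2) * g 2 = 0)).resolve_left h2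
  have gm2 : g (-2) = 0 := by
    have e := hg.sub_mul_eq_sub_one_mul_succ h1 (-2)
    norm_num only [gm1] at e
    exact (mul_eq_zero.mp e).resolve_left fun hc => h2 (by linear_combination -hc)
  funext m
  obtain hm | rfl | rfl | rfl | hm : m ≤ -2 ∨ m = -1 ∨ m = 0 ∨ m = 1 ∨ 2 ≤ m := by omega
  · exact hg.eq_zero_of_le_neg_two gm1 gm2 hm
  · exact gm1
  · exact g0
  · exact h1
  · exact hg.eq_zero_of_two_le h1 g2 hm

end IsHomogeneousSolution

theorem isHomogeneousSolution_sub_particular {K : Type*} [Field K] {lam b c : K} {f : ℤ → K}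
    (hf : ∀ m n : ℤ, ((m : K) - lam * n) * f m - ((n : K) - lam * m) * f n
      = ((m : K) - n) * (f (m + n) - b ^ 2 * n * m))
    (hc : c * (lam + 1) = b ^ 2) (a : K) :
    IsHomogeneousSolution lam fun m => f m - a * m - c * m * (m - 1) := by
  intro m n
  push_cast
  linear_combination hf m n + ((m : K) - n) * m * n * hc

theorem stmt_9_general (lam : ℂ) (h2 : lam ≠ -2) (h0 : lam ≠ 0) (b : ℂ)
    (f : ℤ → ℂ)
    (h : ∀ m n : ℤ,
      ((m : ℂ) - lam * (n : ℂ)) * f m - ((n : ℂ) - lam * (m : ℂ)) * f n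
        = ((m : ℂ) - (n : ℂ)) * (f (m + n) - b ^ 2 * (n : ℂ) * (m : ℂ)))
    (h1' : lam ≠ -1) :
    ∀ m : ℤ, f m = (m : ℂ) * f 1 + (b ^ 2 / (lam + 1)) * (m : ℂ) * ((m : ℂ) - 1) := by
  have hlam1 : lam + 1 ≠ 0 := fun hc => h1' (eq_neg_of_add_eq_zero_left hc)
  have hlam2 : lam + 2 ≠ 0 := fun hc => h2 (eq_neg_of_add_eq_zero_left hc)
  have hg := isHomogeneousSolution_sub_particular h (div_mul_cancel₀ (b ^ 2) hlam1) (f 1)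
  intro m
  have hm := congrFun (hg.eq_zero (by simp) h0 hlam1 hlam2) m
  simp only [Pi.zero_apply] at hm
  linear_combination hm

theorem stmt_9 (lam : ℂ) (h2 : lam ≠ -2) (h0 : lam ≠ 0) (h1 : lam ≠ 1) (b : ℂ)
    (f : ℤ → ℂ)
    (h : ∀ m n : ℤ,
      ((m : ℂ) - lam * (n : ℂ)) * f m - ((n : ℂ) - lam * (m : ℂ)) * f n
        = ((m : ℂ) - (n : ℂ)) * (f (m + n) - b ^ 2 * (n : ℂ) * (m : ℂ)))
    (h1' : lam ≠ -1) :
    ∀ m : ℤ, f m = (m : ℂ) * f 1 + (b ^ 2 / (lam + 1)) * (m : ℂ) * ((m : ℂ) - 1) :=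
  stmt_9_general lam h2 h0 b f h h1'
end

section
/- Let b ∈ ℂ and f : ℤ → ℂ satisfy (m-n)·(f(m) + f(n) - f(m+n) + b²·n·m) = 0 for all m, n ∈ ℤ (the case λ = 1). Then f(n) = n·f(1) + (b²/2)·n·(n-1) for all n ∈ ℤ. -/
/-! Subtracting the quadratic `b² n (n - 1) / 2` turns `f` into a map `g : ℤ → ℂ` with
`g (m + n) = g m + g n` whenever `m ≠ n`. Such a map is already additive: the off-diagonal
instances `(1, 0)`, `(1, -1)` and `(2, -1)` give `g 0 = 0`, `g (-1) = -g 1` and `g 2 = 2 g 1`,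
so `g (n + 1) = g n + g 1` holds for every `n`, and hence `g n = n g 1`. -/

namespace Int

variable {M : Type*} [AddCommGroup M] {g : ℤ → M}

theorem map_zero_of_map_add_of_ne (hg : ∀ m n : ℤ, m ≠ n → g (m + n) = g m + g n) : g 0 = 0 := by
  simpa using (hg 1 0 one_ne_zero).symm

theorem map_succ_of_map_add_of_ne (hg : ∀ m n : ℤ, m ≠ n → g (m + n) = g m + g n) (n : ℤ) :
    g (n + 1) = g n + g 1 := by
  rcases eq_or_ne n 1 with rfl | hn
  · have hneg : g (-1) = -g 1 := eq_neg_of_add_eq_zero_right <| by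
      simpa [map_zero_of_map_add_of_ne hg] using (hg 1 (-1) (by decide)).symm
    have h2 : g 1 = g 2 + g (-1) := by simpa using hg 2 (-1) (by decide)
    rw [one_add_one_eq_two, eq_sub_of_add_eq h2.symm, hneg, sub_neg_eq_add]
  · exact hg n 1 hn

theorem map_eq_zsmul_of_map_add_of_ne (hg : ∀ m n : ℤ, m ≠ n → g (m + n) = g m + g n)
    (n : ℤ) : g n = n • g 1 := by
  induction n using Int.induction_on with
  | zero => simpa using map_zero_of_map_add_of_ne hg
  | succ k ih => rw [map_succ_of_map_add_of_ne hg, ih, add_zsmul, one_zsmul]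
  | pred k ih =>
    have hk := map_succ_of_map_add_of_ne hg (-k - 1)
    rw [sub_add_cancel, ih] at hk
    rw [sub_zsmul, one_zsmul, hk, add_neg_cancel_right]

end Int

theorem stmt_10 (b : ℂ) (f : ℤ → ℂ)
    (h : ∀ m n : ℤ,
      ((m : ℂ) - (n : ℂ)) * (f m + f n - f (m + n) + b ^ 2 * (n : ℂ) * (m : ℂ)) = 0) :
    ∀ n : ℤ, f n = (n : ℂ) * f 1 + (b ^ 2 / 2) * (n : ℂ) * ((n : ℂ) - 1) := by
  set g : ℤ → ℂ := fun n ↦ f n - b ^ 2 / 2 * n * (n - 1) with hg_def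
  have hg : ∀ m n : ℤ, m ≠ n → g (m + n) = g m + g n := by
    intro m n hmn
    have hsub : (m : ℂ) - n ≠ 0 := sub_ne_zero.mpr (Int.cast_injective.ne hmn)
    have hf := (mul_eq_zero.mp (h m n)).resolve_left hsub
    simp only [hg_def, Int.cast_add]
    linear_combination -hf
  intro n
  have hn := Int.map_eq_zsmul_of_map_add_of_ne hg n
  simp only [hg_def, zsmul_eq_mul, Int.cast_one, sub_self, mul_zero, sub_zero] at hn
  linear_combination hn
end

section
/- Let b ∈ ℂ and f : ℤ → ℂ satisfy (m + 2n)·f(m) - (n + 2m)·f(n) = (m-n)·(f(m+n) - b²·n·m) for all m, n ∈ ℤ (the case λ = -2). Then f(m) = (1/6)·(m³ - m)·f(2) - (1/3)·(m³ - 4m)·f(1) + (b²/3)·m·(m-2)·(m-1) for all m ∈ ℤ. -/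
/-!
The equation is linear in the pair `(f, b²)`, so the difference of two solutions with the same `b`
solves the homogeneous equation. Putting `n = 1` gives `(m - 1) f(m + 1) = (m + 2) f(m) - (2m + 1) f(1)`,
which determines a homogeneous solution on `m ≥ 2` from `f 1` and `f 2`, and putting `n = -m` shows it
is odd; hence a solution is determined by `f 1` and `f 2`. The cubic on the right-hand side is a
solution with those values, since `m`, `m³` solve the homogeneous equation and `-b² m²` the
inhomogeneous one.
-/

variable {K : Type*} [Field K]

/-- The functional equation with `λ = -2`; `c` stands for `b²`. -/
def SolvesFEq (c : K) (f : ℤ → K) : Prop :=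
  ∀ m n : ℤ, ((m : K) + 2 * (n : K)) * f m - ((n : K) + 2 * (m : K)) * f n
    = ((m : K) - (n : K)) * (f (m + n) - c * (n : K) * (m : K))

def cubicSol (c a₁ a₂ : K) (m : ℤ) : K :=
  (1 / 6) * ((m : K) ^ 3 - (m : K)) * a₂ - (1 / 3) * ((m : K) ^ 3 - 4 * (m : K)) * a₁
    + (c / 3) * (m : K) * ((m : K) - 2) * ((m : K) - 1)

section CharZero

variable [CharZero K]

theorem cubicSol_one (c a₁ a₂ : K) : cubicSol c a₁ a₂ 1 = a₁ := by
  norm_num [cubicSol]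

theorem cubicSol_two (c a₁ a₂ : K) : cubicSol c a₁ a₂ 2 = a₂ := by
  norm_num [cubicSol]

theorem solvesFEq_cubicSol (c a₁ a₂ : K) : SolvesFEq c (cubicSol c a₁ a₂) := by
  intro m n
  simp only [cubicSol, Int.cast_add]
  ring

end CharZero

namespace SolvesFEq

variable {c c' : K} {f g : ℤ → K}

theorem sub (hf : SolvesFEq c f) (hg : SolvesFEq c' g) : SolvesFEq (c - c') (f - g) := by
  intro m n
  simp only [Pi.sub_apply]
  linear_combination hf m n - hg m n

theorem succ_mul (hf : SolvesFEq c f) (m : ℤ) :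
    ((m : K) - 1) * f (m + 1)
      = ((m : K) + 2) * f m - (2 * (m : K) + 1) * f 1 + c * (m : K) * ((m : K) - 1) := by
  have e := hf m 1
  push_cast at e
  linear_combination -e

variable [CharZero K]

theorem apply_zero (hf : SolvesFEq c f) : f 0 = 0 := by
  simpa using hf 1 0

theorem apply_neg (hf : SolvesFEq c f) (m : ℤ) : f (-m) = -f m - 2 * c * (m : K) ^ 2 := by
  rcases eq_or_ne m 0 with rfl | hm
  · simp [hf.apply_zero]
  have hm' : (m : K) ≠ 0 := Int.cast_ne_zero.mpr hm
  have e := hf m (-m)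
  simp only [add_neg_cancel, hf.apply_zero, Int.cast_neg] at e
  apply mul_left_cancel₀ hm'
  linear_combination -e

theorem eq_zero (hf : SolvesFEq 0 f) (h₁ : f 1 = 0) (h₂ : f 2 = 0) : f = 0 := by
  have hpos : ∀ n : ℕ, 1 ≤ n → f n = 0 := by
    intro n hn
    induction n, hn using Nat.le_induction with
    | base => exact_mod_cast h₁
    | succ n hn ih =>
      rcases eq_or_lt_of_le hn with rfl | hn'
      · exact_mod_cast h₂
      have hne : (n : K) - 1 ≠ 0 := by
        rw [sub_ne_zero]
        exact_mod_cast hn'.ne'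
      have e := hf.succ_mul n
      rw [ih, h₁] at e
      push_cast at e ⊢
      simpa [hne] using e
  funext m
  obtain ⟨n, rfl | rfl⟩ := Int.eq_nat_or_neg m
  · rcases Nat.eq_zero_or_pos n with rfl | hn
    · exact hf.apply_zero
    · exact hpos n hn
  · rcases Nat.eq_zero_or_pos n with rfl | hn
    · simpa using hf.apply_zero
    · simp [hf.apply_neg, hpos n hn]

theorem eq_of_apply_one_of_apply_two (hf : SolvesFEq c f) (hg : SolvesFEq c g)
    (h₁ : f 1 = g 1) (h₂ : f 2 = g 2) : f = g := by
  have hd : SolvesFEq 0 (f - g) := sub_self c ▸ hf.sub hg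
  exact sub_eq_zero.mp (hd.eq_zero (sub_eq_zero.mpr h₁) (sub_eq_zero.mpr h₂))

end SolvesFEq

theorem stmt_11 (b : ℂ) (f : ℤ → ℂ)
    (h : ∀ m n : ℤ,
      ((m : ℂ) + 2 * (n : ℂ)) * f m - ((n : ℂ) + 2 * (m : ℂ)) * f n
        = ((m : ℂ) - (n : ℂ)) * (f (m + n) - b ^ 2 * (n : ℂ) * (m : ℂ))) :
    ∀ m : ℤ, f m = (1 / 6) * ((m : ℂ) ^ 3 - (m : ℂ)) * f 2
      - (1 / 3) * ((m : ℂ) ^ 3 - 4 * (m : ℂ)) * f 1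
      + (b ^ 2 / 3) * (m : ℂ) * ((m : ℂ) - 2) * ((m : ℂ) - 1) := by
  have hf : SolvesFEq (b ^ 2) f := h
  intro m
  exact congr_fun (hf.eq_of_apply_one_of_apply_two (solvesFEq_cubicSol _ (f 1) (f 2))
    (cubicSol_one _ _ _).symm (cubicSol_two _ _ _).symm) m
end

section
/- In the twisted deformative Schrödinger–Virasoro algebra 𝓛 with μ = 0 and λ = -2, the linear map D₋₂ defined by D₋₂(Lₙ) = n³·Mₙ, D₋₂(Yₙ) = D₋₂(Mₙ) = 0 is a derivation of 𝓛, and it is an outer derivation (not of the form ad(z) for any z ∈ 𝓛). -/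
/-!
`D` is a derivation because both sides of the Leibniz rule are bilinear, so it suffices to
check it on the spanning set `{Lₙ, Yₙ, Mₙ}`; the only nontrivial case, `(Lₙ, Lₘ)`, is the
polynomial identity `(m - n)(n + m)³ = m³(m + 2n) - n³(n + 2m)`.

It is outer because the `M_k`-coordinate of `⁅L_k, z⁆` is `2k` times the `M₀`-coordinate of `z`,
linear in `k`, whereas `D (L_k) = k³ M_k`; comparing `k = 1` and `k = 2` gives a contradiction.
-/

section Leibniz

variable {R A : Type*} [CommRing R] [LieRing A] [LieAlgebra R A]

theorem LinearMap.leibniz_of_leibniz_on_span {s : Set A} (hs : Submodule.span R s = ⊤)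
    (D : A →ₗ[R] A)
    (h : ∀ x ∈ s, ∀ y ∈ s, D ⁅x, y⁆ = ⁅D x, y⁆ + ⁅x, D y⁆) (x y : A) :
    D ⁅x, y⁆ = ⁅D x, y⁆ + ⁅x, D y⁆ := by
  let F : A →ₗ[R] A →ₗ[R] A := LinearMap.mk₂ R (fun x y => D ⁅x, y⁆ - ⁅D x, y⁆ - ⁅x, D y⁆)
    (fun _ _ _ => by simp only [add_lie, map_add]; abel)
    (fun _ _ _ => by simp only [smul_lie, map_smul, smul_sub])
    (fun _ _ _ => by simp only [lie_add, map_add]; abel)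
    (fun _ _ _ => by simp only [lie_smul, map_smul, smul_sub])
  have hF : F = 0 := LinearMap.ext_on hs fun x hx =>
    LinearMap.ext_on hs fun y hy => by simp [F, h x hx y hy]
  simpa [F, sub_sub, sub_eq_zero] using congr($hF x y)

end Leibniz

theorem range_fin_three_eq_union {ι V : Type*} (L Y M : ι → V) :
    Set.range (fun p : ι × Fin 3 => if p.2 = 0 then L p.1 else if p.2 = 1 then Y p.1 else M p.1)
      = Set.range L ∪ Set.range Y ∪ Set.range M := by
  ext x
  constructor
  · rintro ⟨⟨n, i⟩, rfl⟩
    fin_cases i <;> simp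
  · rintro ((⟨n, rfl⟩ | ⟨n, rfl⟩) | ⟨n, rfl⟩)
    exacts [⟨(n, 0), rfl⟩, ⟨(n, 1), rfl⟩, ⟨(n, 2), rfl⟩]

theorem exists_dual_family_fin_three {R V ι : Type*} [Ring R] [AddCommGroup V] [Module R V]
    [DecidableEq ι] {L Y M : ι → V}
    (hspan : Submodule.span R (Set.range L ∪ Set.range Y ∪ Set.range M) = ⊤)
    (hind : LinearIndependent R (fun p : ι × Fin 3 =>
      if p.2 = 0 then L p.1 else if p.2 = 1 then Y p.1 else M p.1)) :
    ∃ φ : ι → Module.Dual R V, (∀ k n, φ k (L n) = 0) ∧ (∀ k n, φ k (Y n) = 0) ∧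
      ∀ k n, φ k (M n) = if n = k then 1 else 0 := by
  let B := Module.Basis.mk hind (by rw [range_fin_three_eq_union, hspan])
  have hB (p : ι × Fin 3) (k : ι) : B.coord (k, 2) (B p) = if p = (k, 2) then 1 else 0 := by
    rw [B.coord_apply, B.repr_self, Finsupp.single_apply, eq_comm]
  refine ⟨fun k => B.coord (k, 2), fun k n => ?_, fun k n => ?_, fun k n => ?_⟩
  · simpa [B] using hB (n, 0) k
  · simpa [B] using hB (n, 1) k
  · simpa [B] using hB (n, 2) k

section SchrodingerVirasoro

variable {𝓛 : Type*} [LieRing 𝓛] [LieAlgebra ℂ 𝓛] {L Y M : ℤ → 𝓛}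

theorem leibniz_on_generators
    (hLL : ∀ n m : ℤ, ⁅L n, L m⁆ = ((m : ℂ) - (n : ℂ)) • L (n + m))
    (hLY : ∀ n m : ℤ, ⁅L n, Y m⁆ = ((m : ℂ) + (n : ℂ) / 2) • Y (n + m))
    (hYY : ∀ n m : ℤ, ⁅Y n, Y m⁆ = ((m : ℂ) - (n : ℂ)) • M (n + m))
    (hLM : ∀ n m : ℤ, ⁅L n, M m⁆ = ((m : ℂ) + 2 * (n : ℂ)) • M (n + m))
    (hYM : ∀ n m : ℤ, ⁅Y n, M m⁆ = 0) (hMM : ∀ n m : ℤ, ⁅M n, M m⁆ = 0)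
    {D : 𝓛 →ₗ[ℂ] 𝓛} (hDL : ∀ n : ℤ, D (L n) = ((n : ℂ) ^ 3) • M n)
    (hDY : ∀ n : ℤ, D (Y n) = 0) (hDM : ∀ n : ℤ, D (M n) = 0) :
    ∀ x ∈ Set.range L ∪ Set.range Y ∪ Set.range M, ∀ y ∈ Set.range L ∪ Set.range Y ∪ Set.range M,
      D ⁅x, y⁆ = ⁅D x, y⁆ + ⁅x, D y⁆ := by
  rintro _ ((⟨n, rfl⟩ | ⟨n, rfl⟩) | ⟨n, rfl⟩) _ ((⟨m, rfl⟩ | ⟨m, rfl⟩) | ⟨m, rfl⟩)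
  · rw [hLL, map_smul, hDL, hDL, hDL, smul_lie, lie_smul, ← lie_skew, hLM, hLM, add_comm m n]
    match_scalars
    ring
  all_goals simp [hLY, hYY, hLM, hYM, hMM, hDL, hDY, hDM, ← lie_skew (M _),
    ← lie_skew (Y _) (L _)]

theorem dual_M_apply_lie_L (hspan : Submodule.span ℂ (Set.range L ∪ Set.range Y ∪ Set.range M) = ⊤)
    (hLL : ∀ n m : ℤ, ⁅L n, L m⁆ = ((m : ℂ) - (n : ℂ)) • L (n + m))
    (hLY : ∀ n m : ℤ, ⁅L n, Y m⁆ = ((m : ℂ) + (n : ℂ) / 2) • Y (n + m))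
    (hLM : ∀ n m : ℤ, ⁅L n, M m⁆ = ((m : ℂ) + 2 * (n : ℂ)) • M (n + m))
    {φ : ℤ → Module.Dual ℂ 𝓛} (hφL : ∀ k n, φ k (L n) = 0) (hφY : ∀ k n, φ k (Y n) = 0)
    (hφM : ∀ k n, φ k (M n) = if n = k then 1 else 0) (k : ℤ) (x : 𝓛) :
    φ k ⁅L k, x⁆ = 2 * k * φ 0 x := by
  suffices φ k ∘ₗ LieAlgebra.ad ℂ 𝓛 (L k) = (2 * k : ℂ) • φ 0 from congr($this x)
  refine LinearMap.ext_on hspan ?_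
  rintro _ ((⟨n, rfl⟩ | ⟨n, rfl⟩) | ⟨n, rfl⟩)
  · simp [hLL, hφL]
  · simp [hLY, hφY]
  · by_cases hn : n = 0 <;> simp [hLM, hφM, hn]

end SchrodingerVirasoro

theorem stmt_13 (𝓛 : Type*) [LieRing 𝓛] [LieAlgebra ℂ 𝓛]
    (L Y M : ℤ → 𝓛)
    (hspan : Submodule.span ℂ (Set.range L ∪ Set.range Y ∪ Set.range M) = ⊤)
    (hind : LinearIndependent ℂ (fun p : ℤ × Fin 3 =>
      if p.2 = 0 then L p.1 else if p.2 = 1 then Y p.1 else M p.1))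
    (hLL : ∀ n m : ℤ, ⁅L n, L m⁆ = ((m : ℂ) - (n : ℂ)) • L (n + m))
    (hLY : ∀ n m : ℤ, ⁅L n, Y m⁆ = ((m : ℂ) + (n : ℂ) / 2) • Y (n + m))
    (hYY : ∀ n m : ℤ, ⁅Y n, Y m⁆ = ((m : ℂ) - (n : ℂ)) • M (n + m))
    (hLM : ∀ n m : ℤ, ⁅L n, M m⁆ = ((m : ℂ) + 2 * (n : ℂ)) • M (n + m))
    (hYM : ∀ n m : ℤ, ⁅Y n, M m⁆ = 0)
    (hMM : ∀ n m : ℤ, ⁅M n, M m⁆ = 0)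
    (D : 𝓛 →ₗ[ℂ] 𝓛)
    (hDL : ∀ n : ℤ, D (L n) = ((n : ℂ) ^ 3) • M n)
    (hDY : ∀ n : ℤ, D (Y n) = 0)
    (hDM : ∀ n : ℤ, D (M n) = 0) :
    (∀ x y : 𝓛, D ⁅x, y⁆ = ⁅D x, y⁆ + ⁅x, D y⁆) ∧
      ¬ ∃ z : 𝓛, ∀ x : 𝓛, D x = ⁅z, x⁆ := by
  refine ⟨D.leibniz_of_leibniz_on_span hspan
    (leibniz_on_generators hLL hLY hYY hLM hYM hMM hDL hDY hDM), ?_⟩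
  rintro ⟨z, hz⟩
  obtain ⟨φ, hφL, hφY, hφM⟩ := exists_dual_family_fin_three hspan hind
  have hcubic (k : ℤ) : (k : ℂ) ^ 3 = -(2 * k * φ 0 z) := by
    rw [← dual_M_apply_lie_L hspan hLL hLY hLM hφL hφY hφM, ← map_neg, lie_skew, ← hz, hDL]
    simp [hφM]
  have : (6 : ℂ) = 0 := by linear_combination hcubic 2 - 2 * hcubic 1
  norm_num at this
end

section
/- In the twisted deformative Schrödinger–Virasoro algebra 𝓛 with μ = 0 and λ = -1, the linear maps D₋₁: Lₙ ↦ n²Mₙ (zero on Yₙ, Mₙ) and D̄₋₁: Yₙ ↦ n·Mₙ (zero on Lₙ, Mₙ) are both derivations of 𝓛. -/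
lemma deriv_of_span {𝓛 : Type*} [LieRing 𝓛] [LieAlgebra ℂ 𝓛]
    (D : 𝓛 →ₗ[ℂ] 𝓛) (S : Set 𝓛) (hspan : Submodule.span ℂ S = ⊤)
    (h : ∀ a ∈ S, ∀ b ∈ S, D ⁅a, b⁆ = ⁅D a, b⁆ + ⁅a, D b⁆) :
    ∀ x y : 𝓛, D ⁅x, y⁆ = ⁅D x, y⁆ + ⁅x, D y⁆ := by
  have key : ∀ x ∈ Submodule.span ℂ S, ∀ y ∈ Submodule.span ℂ S,
      D ⁅x, y⁆ = ⁅D x, y⁆ + ⁅x, D y⁆ := by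
    intro x hx
    induction hx using Submodule.span_induction with
    | mem a ha =>
      intro y hy
      induction hy using Submodule.span_induction with
      | mem b hb => exact h a ha b hb
      | zero => simp
      | add u v hu hv ihu ihv => simp only [lie_add, map_add, ihu, ihv]; abel
      | smul c u hu ihu => simp only [lie_smul, map_smul, ihu]; module
    | zero => intro y hy; simp
    | add u v hu hv ihu ihv => intro y hy; simp only [add_lie, map_add, ihu y hy, ihv y hy]; abel
    | smul c u hu ihu => intro y hy; simp only [smul_lie, map_smul, ihu y hy]; module
  intro x y
  exact key x (by rw [hspan]; trivial) y (by rw [hspan]; trivial)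

theorem stmt_15 (𝓛 : Type*) [LieRing 𝓛] [LieAlgebra ℂ 𝓛]
    (L Y M : ℤ → 𝓛)
    (hspan : Submodule.span ℂ (Set.range L ∪ Set.range Y ∪ Set.range M) = ⊤)
    (hLL : ∀ n m : ℤ, ⁅L n, L m⁆ = ((m : ℂ) - (n : ℂ)) • L (n + m))
    (hLY : ∀ n m : ℤ, ⁅L n, Y m⁆ = (m : ℂ) • Y (n + m))
    (hYY : ∀ n m : ℤ, ⁅Y n, Y m⁆ = ((m : ℂ) - (n : ℂ)) • M (n + m))
    (hLM : ∀ n m : ℤ, ⁅L n, M m⁆ = ((m : ℂ) + (n : ℂ)) • M (n + m))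
    (hYM : ∀ n m : ℤ, ⁅Y n, M m⁆ = 0)
    (hMM : ∀ n m : ℤ, ⁅M n, M m⁆ = 0)
    (D₁ D₂ : 𝓛 →ₗ[ℂ] 𝓛)
    (hD₁L : ∀ n : ℤ, D₁ (L n) = ((n : ℂ) ^ 2) • M n)
    (hD₁Y : ∀ n : ℤ, D₁ (Y n) = 0)
    (hD₁M : ∀ n : ℤ, D₁ (M n) = 0)
    (hD₂L : ∀ n : ℤ, D₂ (L n) = 0)
    (hD₂Y : ∀ n : ℤ, D₂ (Y n) = (n : ℂ) • M n)
    (hD₂M : ∀ n : ℤ, D₂ (M n) = 0) :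
    (∀ x y : 𝓛, D₁ ⁅x, y⁆ = ⁅D₁ x, y⁆ + ⁅x, D₁ y⁆) ∧
      (∀ x y : 𝓛, D₂ ⁅x, y⁆ = ⁅D₂ x, y⁆ + ⁅x, D₂ y⁆) := by
  have hYL : ∀ n m : ℤ, ⁅Y n, L m⁆ = -((n : ℂ) • Y (n + m)) := by
    intro n m; rw [← lie_skew, hLY, add_comm m n]
  have hML : ∀ n m : ℤ, ⁅M n, L m⁆ = -(((n : ℂ) + (m : ℂ)) • M (n + m)) := by
    intro n m; rw [← lie_skew, hLM, add_comm m n]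
  have hMY : ∀ n m : ℤ, ⁅M n, Y m⁆ = 0 := by
    intro n m; rw [← lie_skew, hYM]; simp
  constructor
  · apply deriv_of_span D₁ _ hspan
    rintro a ((⟨n, rfl⟩ | ⟨n, rfl⟩) | ⟨n, rfl⟩) b ((⟨m, rfl⟩ | ⟨m, rfl⟩) | ⟨m, rfl⟩) <;>
      simp [hLL, hLY, hYY, hLM, hYM, hMM, hYL, hML, hMY,
        hD₁L, hD₁Y, hD₁M, smul_smul] <;> module
  · apply deriv_of_span D₂ _ hspan
    rintro a ((⟨n, rfl⟩ | ⟨n, rfl⟩) | ⟨n, rfl⟩) b ((⟨m, rfl⟩ | ⟨m, rfl⟩) | ⟨m, rfl⟩) <;>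
      simp [hLL, hLY, hYY, hLM, hYM, hMM, hYL, hML, hMY,
        hD₂L, hD₂Y, hD₂M, smul_smul] <;> module
end
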